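/- For every real x with 0 < x < 1, Σ_{k=1}^∞ ((k−1)·k^{k-2}/k!) · (x e^{-x})^k = x²/2. -/

import Mathlib

/-!
Write `c_k = k (k+1)^(k-1) / (k+1)!`. For small `x`, expand `(x e^{-x})^(k+1)` as
`x^(k+1) ∑_j (-(k+1) x)^j / j!` and collect powers of `x`: the coefficient of `x^(n+1)` is
`∑_{k ≤ n} c_k (-(k+1))^(n-k) / (n-k)!`, which is `(n+1)!⁻¹` times the `(n+1)`-st finite
difference at `0` of `m ↦ m^n - m^(n-1)`. This polynomial has degree `n`, so the coefficient
vanishes for `n ≥ 2`, while it is `1/2` for `n = 1`. The rearrangement is absolutely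
convergent when `|x| e^{|x|} < e^{-1}`; the identity extends to all of `(0, 1)` by analytic
continuation, because `c_k ≤ e^(k+1)` gives the power series `∑ c_k t^k` radius at least
`e^{-1}` and `x e^{-x} < e^{-1}` for `x ≠ 1`.
-/

open Finset Real Topology FormalMultilinearSeries

theorem sum_range_alternating_choose_mul_pow_eq_zero {R : Type*} [CommRing R] {j N : ℕ}
    (h : j < N) :
    ∑ m ∈ range (N + 1), (-1 : R) ^ (N - m) * N.choose m * (m : R) ^ j = 0 := by
  simpa [fwdDiff_iter_pow_eq_zero_of_lt h, zsmul_eq_mul] using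
    (fwdDiff_iter_eq_sum_shift (1 : R) (fun r ↦ r ^ j) N 0).symm

theorem HasSum.sum_antidiagonal {A α : Type*} [AddMonoid A] [HasAntidiagonal A]
    [AddCommMonoid α] [TopologicalSpace α] [ContinuousAdd α] [RegularSpace α]
    {f : A × A → α} {a : α} (hf : HasSum f a) :
    HasSum (fun n ↦ ∑ p ∈ antidiagonal n, f p) a := by
  simpa [Finset.sum_attach] using
    (HasAntidiagonal.sigmaAntidiagonalEquivProd.hasSum_iff.mpr hf).sigma fun n ↦ hasSum_fintype _

theorem mul_exp_neg_lt_exp_neg_one {x : ℝ} (hx : x ≠ 1) : x * exp (-x) < exp (-1) := by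
  have h : x < exp (x - 1) := by
    simpa using add_one_lt_exp (sub_ne_zero.mpr hx)
  calc x * exp (-x) < exp (x - 1) * exp (-x) := by gcongr
    _ = exp (-1) := by rw [← exp_add]; ring_nf

theorem mul_exp_lt_exp_neg_one {x : ℝ} (hx0 : 0 ≤ x) (hx : x < 1 / 8) :
    x * exp x < exp (-1) := by
  have he : exp 1 < 2.7182818286 := exp_one_lt_d9
  have hexp : exp x ≤ exp 1 := exp_le_exp.mpr (by linarith)
  rw [exp_neg, ← one_div, lt_div_iff₀ (exp_pos 1)]
  calc x * exp x * exp 1 ≤ x * exp 1 * exp 1 := by gcongr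
    _ < 1 / 8 * 2.7182818286 * 2.7182818286 := by gcongr
    _ < 1 := by norm_num

-- The coefficient of `t ^ (k + 1)` in `T(t) ^ 2 / 2`, where `T(t) = ∑ n ^ (n - 1) t ^ n / n!` is
-- the tree function, the inverse of `x ↦ x * exp (-x)`.
noncomputable def treeSqCoeff (k : ℕ) : ℝ :=
  (k : ℝ) * (k + 1 : ℝ) ^ (k - 1) / Nat.factorial (k + 1)

theorem treeSqCoeff_nonneg (k : ℕ) : 0 ≤ treeSqCoeff k := by
  unfold treeSqCoeff; positivity

theorem treeSqCoeff_le_exp_one_pow (k : ℕ) : treeSqCoeff k ≤ exp 1 ^ (k + 1) := by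
  calc treeSqCoeff k ≤ (k + 1 : ℝ) ^ (k + 1) / Nat.factorial (k + 1) := by
        unfold treeSqCoeff
        gcongr
        rw [pow_succ']
        gcongr <;> first | linarith | omega
    _ ≤ exp (k + 1) := by exact_mod_cast pow_div_factorial_le_exp (x := k + 1) (by positivity) _
    _ = exp 1 ^ (k + 1) := by rw [← exp_nat_mul]; push_cast; ring_nf

theorem exp_neg_one_le_radius_treeSqCoeff :
    ENNReal.ofReal (exp (-1)) ≤ (ofScalars ℝ treeSqCoeff).radius := by
  refine le_radius_of_bound _ (exp 1) fun n ↦ ?_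
  rw [ofScalars_norm, norm_of_nonneg (treeSqCoeff_nonneg n),
    coe_toNNReal _ (exp_pos _).le, exp_neg]
  calc treeSqCoeff n * (exp 1)⁻¹ ^ n ≤ exp 1 ^ (n + 1) * (exp 1)⁻¹ ^ n := by
        gcongr; exact treeSqCoeff_le_exp_one_pow n
    _ = exp 1 := by rw [pow_succ, mul_right_comm, ← mul_pow, mul_inv_cancel₀ (exp_ne_zero 1),
        one_pow, one_mul]

theorem summable_treeSqCoeff_mul_pow {t : ℝ} (ht0 : 0 ≤ t) (ht : t < exp (-1)) :
    Summable fun k ↦ treeSqCoeff k * t ^ k := by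
  have := (ofScalars ℝ treeSqCoeff).summable_norm_mul_pow
    (r := t.toNNReal) ((ENNReal.ofReal_lt_ofReal_iff (exp_pos _)).mpr ht |>.trans_le
      exp_neg_one_le_radius_treeSqCoeff)
  simpa [ofScalars_norm, norm_of_nonneg (treeSqCoeff_nonneg _), ht0]
    using this

theorem analyticAt_tsum_treeSqCoeff_mul_pow {t : ℝ} (ht : |t| < exp (-1)) :
    AnalyticAt ℝ (fun t ↦ ∑' k, treeSqCoeff k * t ^ k) t := by
  have hr := exp_neg_one_le_radius_treeSqCoeff
  have hpos : 0 < (ofScalars ℝ treeSqCoeff).radius :=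
    (ENNReal.ofReal_pos.mpr (exp_pos _)).trans_le hr
  have hmem : t ∈ Metric.eball (0 : ℝ) (ofScalars ℝ treeSqCoeff).radius := by
    rw [Metric.mem_eball, edist_zero_right, ← ofReal_norm]
    exact (ENNReal.ofReal_lt_ofReal_iff (exp_pos _)).mpr ht |>.trans_le hr
  have hsum : (fun t ↦ ∑' k, treeSqCoeff k * t ^ k) =
      ofScalarsSum (E := ℝ) treeSqCoeff := by
    simp [ofScalarsSum_eq_tsum]
  rw [hsum]
  exact ((ofScalars ℝ treeSqCoeff).hasFPowerSeriesOnBall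
    hpos).analyticAt_of_mem hmem

theorem treeSqCoeff_mul_pow {k n : ℕ} (hk : k ≤ n) (hn : 1 ≤ n) :
    treeSqCoeff k * (k + 1 : ℝ) ^ (n - k) =
      ((k + 1 : ℝ) ^ n - (k + 1 : ℝ) ^ (n - 1)) / Nat.factorial (k + 1) := by
  rcases Nat.eq_zero_or_pos k with rfl | hk0
  · simp [treeSqCoeff]
  · have hpow : (k + 1 : ℝ) ^ (k - 1) * (k + 1 : ℝ) ^ (n - k) = (k + 1 : ℝ) ^ (n - 1) := by
      rw [← pow_add]; congr 1; omega
    have hsucc : (k + 1 : ℝ) ^ n = (k + 1) * (k + 1 : ℝ) ^ (n - 1) := by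
      rw [← pow_succ']; congr 1; omega
    rw [treeSqCoeff, div_mul_eq_mul_div, mul_assoc, hpow, hsucc]
    ring

theorem treeSqCoeff_mul_neg_pow_div_factorial {k n : ℕ} (hk : k ≤ n) (hn : 1 ≤ n) :
    treeSqCoeff k * (-(k + 1 : ℝ)) ^ (n - k) / Nat.factorial (n - k) =
      (-1) ^ (n + 1 - (k + 1)) * (n + 1).choose (k + 1) *
        ((k + 1 : ℝ) ^ n - (k + 1 : ℝ) ^ (n - 1)) / Nat.factorial (n + 1) := by
  have hchoose : ((n + 1).choose (k + 1) : ℝ) =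
      Nat.factorial (n + 1) / (Nat.factorial (k + 1) * Nat.factorial (n - k)) := by
    rw [Nat.cast_choose ℝ (by omega : k + 1 ≤ n + 1), Nat.add_sub_add_right]
  rw [Nat.add_sub_add_right, hchoose, neg_pow, mul_left_comm, mul_div_assoc,
    treeSqCoeff_mul_pow hk hn]
  field_simp

theorem sum_antidiagonal_treeSqCoeff_mul_neg_pow (n : ℕ) :
    ∑ p ∈ antidiagonal n, treeSqCoeff p.1 * (-(p.1 + 1 : ℝ)) ^ p.2 / Nat.factorial p.2 =
      if n = 1 then 1 / 2 else 0 := by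
  rw [Nat.sum_antidiagonal_eq_sum_range_succ_mk]
  match n with
  | 0 => simp [treeSqCoeff]
  | 1 => norm_num [Finset.sum_range_succ, treeSqCoeff]
  | n + 2 =>
    set N := n + 2
    have hdiff : ∑ m ∈ range (N + 2), (-1 : ℝ) ^ (N + 1 - m) * (N + 1).choose m *
        ((m : ℝ) ^ N - (m : ℝ) ^ (N - 1)) = 0 := by
      simp_rw [mul_sub, sum_sub_distrib,
        sum_range_alternating_choose_mul_pow_eq_zero (by omega : N < N + 1),
        sum_range_alternating_choose_mul_pow_eq_zero (by omega : N - 1 < N + 1), sub_self]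
    have hzero : ((0 : ℕ) : ℝ) ^ N - ((0 : ℕ) : ℝ) ^ (N - 1) = 0 := by simp [N]
    rw [sum_range_succ', hzero, mul_zero, add_zero] at hdiff
    rw [if_neg (by omega), ← zero_div (Nat.factorial (N + 1) : ℝ), ← hdiff, sum_div]
    refine sum_congr rfl fun k hk ↦ ?_
    rw [treeSqCoeff_mul_neg_pow_div_factorial (by simp at hk; omega) (by omega)]
    push_cast
    ring

theorem hasSum_treeSqCoeff_mul_pow_mul_exp_series (x y : ℝ) (k : ℕ) :
    HasSum (fun j ↦ treeSqCoeff k * x ^ (k + 1) * (((k + 1) * y) ^ j / Nat.factorial j))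
      (treeSqCoeff k * (x * exp y) ^ (k + 1)) := by
  have hexp : (x * exp y) ^ (k + 1) = x ^ (k + 1) * exp ((k + 1) * y) := by
    rw [mul_pow, ← exp_nat_mul]
    push_cast
    ring
  rw [hexp, ← mul_assoc]
  have := (NormedSpace.expSeries_div_hasSum_exp ((k + 1) * y)).mul_left
    (treeSqCoeff k * x ^ (k + 1))
  rwa [← exp_eq_exp_ℝ] at this

theorem tsum_treeSqCoeff_mul_exp_neg_pow_succ_near_zero {x : ℝ} (hx : |x| * exp |x| < exp (-1)) :
    ∑' k, treeSqCoeff k * (x * exp (-x)) ^ (k + 1) = x ^ 2 / 2 := by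
  set f : ℕ × ℕ → ℝ := fun p ↦
    treeSqCoeff p.1 * x ^ (p.1 + 1) * (((p.1 + 1) * -x) ^ p.2 / Nat.factorial p.2)
  have hnorm : (fun p ↦ ‖f p‖) = fun p : ℕ × ℕ ↦
      treeSqCoeff p.1 * |x| ^ (p.1 + 1) * (((p.1 + 1) * |x|) ^ p.2 / Nat.factorial p.2) := by
    ext p
    simp [f, abs_of_nonneg (treeSqCoeff_nonneg _), abs_of_nonneg
      (by positivity : (0 : ℝ) ≤ p.1 + 1)]
  have hf : Summable f := by
    refine Summable.of_norm ?_
    rw [hnorm]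
    refine (summable_prod_of_nonneg fun p ↦ by have := treeSqCoeff_nonneg p.1; positivity).mpr
      ⟨fun k ↦ (hasSum_treeSqCoeff_mul_pow_mul_exp_series _ _ k).summable, ?_⟩
    simp_rw [(hasSum_treeSqCoeff_mul_pow_mul_exp_series _ _ _).tsum_eq]
    exact ((summable_treeSqCoeff_mul_pow (by positivity) hx).mul_right (|x| * exp |x|)).congr
      fun k ↦ by ring
  have hdiag (n : ℕ) : ∑ p ∈ antidiagonal n, f p = if n = 1 then x ^ 2 / 2 else 0 := by
    have hterm : ∀ p ∈ antidiagonal n, f p =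
        treeSqCoeff p.1 * (-(p.1 + 1 : ℝ)) ^ p.2 / Nat.factorial p.2 * x ^ (n + 1) := by
      intro p hp
      rw [← mem_antidiagonal.mp hp]
      simp only [f]
      rw [show ((p.1 : ℝ) + 1) * -x = -(p.1 + 1) * x by ring, mul_pow]
      ring
    rw [sum_congr rfl hterm, ← sum_mul, sum_antidiagonal_treeSqCoeff_mul_neg_pow]
    split_ifs with hn
    · subst hn; ring
    · simp
  have hrows := hf.hasSum.prod_fiberwise fun k ↦
    hasSum_treeSqCoeff_mul_pow_mul_exp_series x (-x) k
  have hdiags := hf.hasSum.sum_antidiagonal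
  simp_rw [hdiag] at hdiags
  exact hrows.tsum_eq.trans (hdiags.unique (hasSum_ite_eq 1 _))

theorem analyticOnNhd_tsum_treeSqCoeff_mul_exp_neg_pow_succ :
    AnalyticOnNhd ℝ (fun y ↦ ∑' k, treeSqCoeff k * (y * exp (-y)) ^ (k + 1))
      (Set.Ioo 0 1) := by
  intro y hy
  have ht : |y * exp (-y)| < exp (-1) := by
    rw [abs_of_pos (by have := hy.1; positivity)]
    exact mul_exp_neg_lt_exp_neg_one hy.2.ne
  have hinner : AnalyticAt ℝ (fun y ↦ y * exp (-y)) y :=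
    analyticAt_id.mul (analyticAt_rexp.comp analyticAt_id.neg)
  have hfactor : (fun y ↦ ∑' k, treeSqCoeff k * (y * exp (-y)) ^ (k + 1)) =
      fun y ↦ y * exp (-y) * ∑' k, treeSqCoeff k * (y * exp (-y)) ^ k := by
    funext z
    rw [← tsum_mul_left]
    exact tsum_congr fun k ↦ by ring
  rw [hfactor]
  exact hinner.mul
    ((analyticAt_tsum_treeSqCoeff_mul_pow ht).comp (f := fun y ↦ y * exp (-y)) hinner)

theorem stmt18 (x : ℝ) (hx0 : 0 < x) (hx1 : x < 1) :
    ∑' k : ℕ, ((k : ℝ) * (k + 1 : ℝ) ^ (k - 1) / Nat.factorial (k + 1)) *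
      (x * Real.exp (-x)) ^ (k + 1) = x ^ 2 / 2 := by
  have hsmall : (fun y ↦ ∑' k, treeSqCoeff k * (y * exp (-y)) ^ (k + 1)) =ᶠ[𝓝 (1 / 16)]
      fun y ↦ y ^ 2 / 2 := by
    filter_upwards [Ioo_mem_nhds (by norm_num : (0 : ℝ) < 1 / 16)
      (by norm_num : (1 / 16 : ℝ) < 1 / 8)] with y hy
    refine tsum_treeSqCoeff_mul_exp_neg_pow_succ_near_zero ?_
    rw [abs_of_pos hy.1]
    exact mul_exp_lt_exp_neg_one hy.1.le hy.2
  exact analyticOnNhd_tsum_treeSqCoeff_mul_exp_neg_pow_succ.eqOn_of_preconnected_of_eventuallyEq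
    (fun y _ ↦ (analyticAt_id.pow 2).div analyticAt_const two_ne_zero) isPreconnected_Ioo
    (by norm_num) hsmall ⟨hx0, hx1⟩
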